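/- Let z₁, …, z_N be distinct complex numbers with N ≥ 2. Then Σ_{k=1}^{N} z_k^{N−n}·(Σ_{j≠k} z_j) / ∏_{j≠k}(z_k − z_j) = −δ_{n,2} for n = 1, …, N; i.e., the sum equals −1 when n = 2 and 0 otherwise. -/

import Mathlib

/-!
The Lagrange basis polynomial at node `v i` is `∏_{j ≠ i} (X - v j) / ∏_{j ≠ i} (v i - v j)`, whose
coefficient of `X ^ (#s - 2)` is `-(∑_{j ≠ i} v j) / ∏_{j ≠ i} (v i - v j)`. Interpolating
`X ^ (N - n)`, a polynomial of degree `< N`, at the `N` nodes `z k` reproduces it exactly, so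
comparing coefficients of `X ^ (N - 2)` shows that the sum is minus the coefficient of
`X ^ (N - 2)` in `X ^ (N - n)`.
-/

open Polynomial Finset

namespace Lagrange

variable {F ι : Type*} [Field F] [DecidableEq ι] {s : Finset ι} {v : ι → F} {i : ι}

theorem basis_eq_C_nodalWeight_mul_nodal_erase :
    Lagrange.basis s v i = C (nodalWeight s v i) * nodal (s.erase i) v := by
  simp_rw [Lagrange.basis, basisDivisor, nodalWeight, prod_mul_distrib, map_prod, nodal]

theorem coeff_basis_card_sub_two (hs : 2 ≤ #s) (hi : i ∈ s) :
    (Lagrange.basis s v i).coeff (#s - 2)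
      = -(∑ j ∈ s.erase i, v j) / ∏ j ∈ s.erase i, (v i - v j) := by
  have hcard : #s - 2 = #(s.erase i) - 1 := by rw [card_erase_of_mem hi]; omega
  rw [basis_eq_C_nodalWeight_mul_nodal_erase, coeff_C_mul, nodal_eq, hcard,
    prod_X_sub_C_coeff_card_pred _ _ (by rw [card_erase_of_mem hi]; omega), nodalWeight,
    prod_inv_distrib, div_eq_inv_mul]

theorem coeff_card_sub_two_eq_sum (hvs : Set.InjOn v s) (hs : 2 ≤ #s) {P : F[X]}
    (hP : P.degree < #s) :
    P.coeff (#s - 2)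
      = -∑ i ∈ s, P.eval (v i) * (∑ j ∈ s.erase i, v j) / ∏ j ∈ s.erase i, (v i - v j) := by
  nth_rewrite 1 [eq_interpolate hvs hP, interpolate_apply, finsetSum_coeff]
  rw [← sum_neg_distrib]
  refine sum_congr rfl fun i hi => ?_
  rw [coeff_C_mul, coeff_basis_card_sub_two hs hi]
  ring

end Lagrange

/-- For distinct `z₁,…,z_N` (`N ≥ 2`) and `1 ≤ n ≤ N`,
`Σ_k z_k^{N−n}·(Σ_{j≠k} z_j) / ∏_{j≠k}(z_k − z_j) = −δ_{n,2}`. -/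
theorem lagrange_second_identity (N : ℕ) (hN2 : 2 ≤ N) (z : Fin N → ℂ)
    (hz : Function.Injective z) (n : ℕ) (h1 : 1 ≤ n) (hN : n ≤ N) :
    ∑ k, z k ^ (N - n) * (∑ j ∈ Finset.univ.erase k, z j)
        / ∏ j ∈ Finset.univ.erase k, (z k - z j)
      = if n = 2 then -1 else 0 := by
  have hdeg : ((X : ℂ[X]) ^ (N - n)).degree < #(univ : Finset (Fin N)) := by
    rw [degree_X_pow, card_univ, Fintype.card_fin]
    exact_mod_cast (by omega : N - n < N)
  have hcoeff := Lagrange.coeff_card_sub_two_eq_sum hz.injOn (by simpa using hN2) hdeg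
  simp only [card_univ, Fintype.card_fin, eval_pow, eval_X] at hcoeff
  rw [← neg_neg (∑ k, _), ← hcoeff, coeff_X_pow]
  split_ifs <;> first | omega | simp
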